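/- If d_1, d_2 > 1 are coprime integers with 9 ∤ d_1 d_2, then ρ(d_1 d_2) = lcm(ρ(d_1), ρ(d_2)) ≤ ρ(d_1)ρ(d_2)/2 ≤ d_1 d_2 / 2, where ρ denotes the period of the Salajan sequence. -/

import Mathlib

/-!
For any integer sequence, the eventual periods modulo `d` are the positive multiples of the least
one, and by the Chinese remainder theorem the eventual periods modulo `d₁ d₂` are the common ones
modulo `d₁` and `d₂`; hence `ρ(d₁ d₂) = lcm(ρ(d₁), ρ(d₂))`.

Every period modulo `d > 1` is even. For odd `k` the differences `Δₙ = u (n + k) - u n` satisfy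
`Δₙ₊₁ = 3 Δₙ - 10 (-1)ⁿ`, which forces `d ∣ 10`; but modulo 2 the terms alternate in parity, and
modulo 5 we have `4 uₙ ≡ 3ⁿ` with `3` of order 4. So `gcd(ρ(d₁), ρ(d₂)) ≥ 2`, which gives the
factor 2.

For the bound `ρ(d) ≤ d`, write `d = 3ᵃ 2ᵇ s` with `s` odd and prime to 3. For even `K`,
`4 (u (n + K) - u n) = 3ⁿ (3ᴷ - 1)`, so `K` is an eventual period as soon as `2ᵇ⁺² s ∣ 3ᴷ - 1`.
This holds for `K = lcm(2^max(b,1), φ(s))` by lifting the exponent at 2 and by Euler's theorem,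
and as both arguments are even (or `s = 1`), `K ≤ max(2ᵇ s, 2) ≤ d`.
-/

/-- The Salajan sequence: `u j = (3^j - 5*(-1)^j)/4`. -/
def salajanU (j : ℕ) : ℤ := ((3 : ℤ) ^ j - 5 * (-1) ^ j) / 4

/-- The (eventual) minimal period of the Salajan sequence modulo `d`. -/
noncomputable def salajanRho (d : ℕ) : ℕ :=
  sInf {k : ℕ | 0 < k ∧ ∃ n0 : ℕ,
    ∀ n : ℕ, n0 ≤ n → salajanU n ≡ salajanU (n + k) [ZMOD (d : ℤ)]}

open Filter

def eventualPeriods (f : ℕ → ℤ) (d : ℕ) : Set ℕ :=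
  {k | 0 < k ∧ ∀ᶠ n in atTop, f n ≡ f (n + k) [ZMOD d]}

section EventualPeriods

variable {f : ℕ → ℤ} {d : ℕ}

theorem eventually_modEq_add_mul {k : ℕ} (hk : ∀ᶠ n in atTop, f n ≡ f (n + k) [ZMOD d]) (t : ℕ) :
    ∀ᶠ n in atTop, f n ≡ f (n + t * k) [ZMOD d] := by
  induction t with
  | zero => simp
  | succ t ih =>
    filter_upwards [ih, (tendsto_add_atTop_nat (t * k)).eventually hk] with n h₁ h₂
    rw [add_mul, one_mul, ← add_assoc]
    exact h₁.trans h₂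

theorem mem_eventualPeriods_of_dvd {k m : ℕ} (hk : k ∈ eventualPeriods f d) (hkm : k ∣ m)
    (hm : 0 < m) : m ∈ eventualPeriods f d := by
  obtain ⟨t, rfl⟩ := hkm
  exact ⟨hm, by simpa only [mul_comm k t] using eventually_modEq_add_mul hk.2 t⟩

theorem sub_mem_eventualPeriods {a b : ℕ} (ha : a ∈ eventualPeriods f d)
    (hb : b ∈ eventualPeriods f d) (hab : a < b) : b - a ∈ eventualPeriods f d := by
  refine ⟨Nat.sub_pos_of_lt hab, ?_⟩
  filter_upwards [hb.2, (tendsto_add_atTop_nat (b - a)).eventually ha.2] with n hnb hna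
  rw [add_assoc, Nat.sub_add_cancel hab.le] at hna
  exact hnb.trans hna.symm

theorem sInf_eventualPeriods_dvd {k : ℕ} (hk : k ∈ eventualPeriods f d) :
    sInf (eventualPeriods f d) ∣ k := by
  set m := sInf (eventualPeriods f d)
  have hm : m ∈ eventualPeriods f d := Nat.sInf_mem ⟨k, hk⟩
  refine Nat.dvd_of_mod_eq_zero (Nat.eq_zero_of_not_pos fun hpos => ?_)
  have hmul : m * (k / m) ∈ eventualPeriods f d :=
    mem_eventualPeriods_of_dvd hm (dvd_mul_right _ _)
      (Nat.mul_pos hm.1 (Nat.div_pos (Nat.sInf_le hk) hm.1))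
  have hlt : m * (k / m) < k := by have := Nat.div_add_mod k m; omega
  have hmod : k % m ∈ eventualPeriods f d := by
    rw [Nat.mod_eq_sub_mul_div]; exact sub_mem_eventualPeriods hmul hk hlt
  exact (Nat.mod_lt k hm.1).not_ge (Nat.sInf_le hmod)

theorem eventualPeriods_mono {d' : ℕ} (h : d' ∣ d) :
    eventualPeriods f d ⊆ eventualPeriods f d' :=
  fun _ hk => ⟨hk.1, hk.2.mono fun _ hn => hn.of_dvd (Int.natCast_dvd_natCast.mpr h)⟩

theorem eventualPeriods_mul {d₁ d₂ : ℕ} (hcop : d₁.Coprime d₂) :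
    eventualPeriods f (d₁ * d₂) = eventualPeriods f d₁ ∩ eventualPeriods f d₂ := by
  ext k
  simp only [eventualPeriods, Set.mem_inter_iff, Set.mem_ofPred_eq, Nat.cast_mul,
    ← Int.modEq_and_modEq_iff_modEq_mul (m := d₁) (n := d₂) hcop, eventually_and]
  tauto

theorem sInf_eventualPeriods_mul {d₁ d₂ : ℕ} (hcop : d₁.Coprime d₂)
    (h₁ : (eventualPeriods f d₁).Nonempty) (h₂ : (eventualPeriods f d₂).Nonempty) :
    sInf (eventualPeriods f (d₁ * d₂)) =
      Nat.lcm (sInf (eventualPeriods f d₁)) (sInf (eventualPeriods f d₂)) := by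
  have hm₁ := Nat.sInf_mem h₁
  have hm₂ := Nat.sInf_mem h₂
  have hlcm : Nat.lcm (sInf (eventualPeriods f d₁)) (sInf (eventualPeriods f d₂)) ∈
      eventualPeriods f (d₁ * d₂) := by
    have hpos := Nat.lcm_pos hm₁.1 hm₂.1
    rw [eventualPeriods_mul hcop]
    exact ⟨mem_eventualPeriods_of_dvd hm₁ (Nat.dvd_lcm_left _ _) hpos,
      mem_eventualPeriods_of_dvd hm₂ (Nat.dvd_lcm_right _ _) hpos⟩
  have hm : sInf (eventualPeriods f (d₁ * d₂)) ∈ eventualPeriods f d₁ ∩ eventualPeriods f d₂ :=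
    eventualPeriods_mul hcop ▸ Nat.sInf_mem ⟨_, hlcm⟩
  exact Nat.dvd_antisymm (sInf_eventualPeriods_dvd hlcm)
    (Nat.lcm_dvd (sInf_eventualPeriods_dvd hm.1) (sInf_eventualPeriods_dvd hm.2))

end EventualPeriods

theorem Nat.two_mul_lcm_le_mul {a b : ℕ} (ha : 2 ∣ a) (hb : 2 ∣ b) : 2 * a.lcm b ≤ a * b := by
  rcases Nat.eq_zero_or_pos a with rfl | ha₀
  · simp
  calc 2 * a.lcm b ≤ a.gcd b * a.lcm b :=
        Nat.mul_le_mul_right _ (Nat.le_of_dvd (Nat.gcd_pos_of_pos_left _ ha₀) (Nat.dvd_gcd ha hb))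
    _ = a * b := Nat.gcd_mul_lcm a b

theorem salajanRho_eq_sInf (d : ℕ) : salajanRho d = sInf (eventualPeriods salajanU d) := by
  simp only [salajanRho, eventualPeriods, eventually_atTop]

theorem four_mul_salajanU (j : ℕ) : 4 * salajanU j = 3 ^ j - 5 * (-1) ^ j := by
  refine Int.mul_ediv_cancel' (Int.ModEq.dvd (Int.ModEq.symm ?_))
  calc (3 : ℤ) ^ j ≡ 1 * (-1) ^ j [ZMOD 4] := by
        rw [one_mul]; exact (show (3 : ℤ) ≡ -1 [ZMOD 4] by decide).pow j
    _ ≡ 5 * (-1) ^ j [ZMOD 4] := (show (1 : ℤ) ≡ 5 [ZMOD 4] by decide).mul_right _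

theorem salajanU_succ (n : ℕ) : salajanU (n + 1) = 3 * salajanU n + 5 * (-1) ^ n :=
  mul_left_cancel₀ four_ne_zero <| by
    linear_combination four_mul_salajanU (n + 1) - 3 * four_mul_salajanU n

theorem salajanU_cast_zmod_two (n : ℕ) : (salajanU n : ZMod 2) = n + 1 := by
  induction n with
  | zero => decide
  | succ n ih =>
    rw [salajanU_succ]
    push_cast [ih]
    rw [show (-1 : ZMod 2) = 1 from rfl, one_pow]
    ring_nf
    reduce_mod_char

theorem four_mul_salajanU_cast_zmod_five (n : ℕ) : (4 : ZMod 5) * salajanU n = 3 ^ n := by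
  have h := congrArg (Int.cast : ℤ → ZMod 5) (four_mul_salajanU n)
  push_cast at h
  rw [h, show (5 : ZMod 5) = 0 from rfl, zero_mul, sub_zero]

theorem even_of_mem_eventualPeriods_two {k : ℕ} (hk : k ∈ eventualPeriods salajanU 2) :
    Even k := by
  obtain ⟨n, hn⟩ := hk.2.exists
  have h := (ZMod.intCast_eq_intCast_iff _ _ 2).mpr hn
  rw [salajanU_cast_zmod_two, salajanU_cast_zmod_two, Nat.cast_add] at h
  exact ZMod.natCast_eq_zero_iff_even.mp (by linear_combination -h)

theorem even_of_mem_eventualPeriods_five {k : ℕ} (hk : k ∈ eventualPeriods salajanU 5) :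
    Even k := by
  obtain ⟨n, hn⟩ := hk.2.exists
  have h := congrArg ((4 : ZMod 5) * ·) ((ZMod.intCast_eq_intCast_iff _ _ 5).mpr hn)
  simp only [four_mul_salajanU_cast_zmod_five, pow_add] at h
  have h3k : (3 : ZMod 5) ^ k = 1 :=
    ((IsUnit.of_mul_eq_one (a := (3 : ZMod 5)) 2 rfl).pow n).mul_left_cancel
      (h.symm.trans (mul_one _).symm)
  by_contra hodd
  -- `(3 ^ k) ^ 2 = (3 ^ 2) ^ k = (-1) ^ k` in `ZMod 5`
  have : (1 : ZMod 5) = -1 := by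
    rw [← (Nat.not_even_iff_odd.mp hodd).neg_one_pow, show (-1 : ZMod 5) = 3 ^ 2 by decide,
      ← pow_mul, mul_comm, pow_mul, h3k, one_pow]
  exact absurd this (by decide)

theorem dvd_ten_of_odd_mem_eventualPeriods {d k : ℕ} (hk : k ∈ eventualPeriods salajanU d)
    (hodd : Odd k) : d ∣ 10 := by
  obtain ⟨n, hn, hn'⟩ := (hk.2.and ((tendsto_add_atTop_nat 1).eventually hk.2)).exists
  have hrec : 3 * (salajanU (n + k) - salajanU n) - (salajanU (n + 1 + k) - salajanU (n + 1)) =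
      10 * (-1) ^ n := by
    rw [add_right_comm, salajanU_succ, salajanU_succ, pow_add, hodd.neg_one_pow]
    ring
  have h := dvd_sub (hn.dvd.mul_left 3) hn'.dvd
  rw [hrec, (isUnit_neg_one.pow n).dvd_mul_right] at h
  exact_mod_cast h

theorem even_of_mem_eventualPeriods {d k : ℕ} (hd : 1 < d)
    (hk : k ∈ eventualPeriods salajanU d) : Even k := by
  by_contra hodd
  have h10 := dvd_ten_of_odd_mem_eventualPeriods hk (Nat.not_even_iff_odd.mp hodd)
  obtain ⟨p, hp, hpd⟩ := Nat.exists_prime_and_dvd hd.ne'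
  have hp10 : p ∣ 2 * 5 := hpd.trans h10
  rcases (Nat.Prime.dvd_mul hp).mp hp10 with h | h
  · rw [(Nat.prime_dvd_prime_iff_eq hp Nat.prime_two).mp h] at hpd
    exact hodd (even_of_mem_eventualPeriods_two (eventualPeriods_mono hpd hk))
  · rw [(Nat.prime_dvd_prime_iff_eq hp Nat.prime_five).mp h] at hpd
    exact hodd (even_of_mem_eventualPeriods_five (eventualPeriods_mono hpd hk))

theorem mem_eventualPeriods_three_pow_mul {a m K : ℕ} (hK₀ : 0 < K) (hK : Even K)
    (hdvd : (4 * m : ℤ) ∣ 3 ^ K - 1) : K ∈ eventualPeriods salajanU (3 ^ a * m) := by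
  refine ⟨hK₀, eventually_atTop.mpr ⟨a, fun n hn => Int.modEq_iff_dvd.mpr ?_⟩⟩
  have h4 : 4 * (salajanU (n + K) - salajanU n) = 3 ^ n * (3 ^ K - 1) := by
    rw [mul_sub, four_mul_salajanU, four_mul_salajanU, pow_add, pow_add, hK.neg_one_pow]
    ring
  refine (mul_dvd_mul_iff_left (four_ne_zero (α := ℤ))).mp ?_
  rw [h4, Nat.cast_mul, Nat.cast_pow, Nat.cast_ofNat, mul_left_comm]
  exact mul_dvd_mul (pow_dvd_pow 3 hn) hdvd

theorem two_pow_add_three_dvd_three_pow_two_pow_sub_one (t : ℕ) :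
    (2 : ℤ) ^ (t + 3) ∣ 3 ^ 2 ^ (t + 1) - 1 := by
  induction t with
  | zero => norm_num
  | succ t ih =>
    have hodd : Odd ((3 : ℤ) ^ 2 ^ (t + 1)) := Odd.pow (by decide)
    have hfactor : (3 : ℤ) ^ 2 ^ (t + 1 + 1) - 1 =
        (3 ^ 2 ^ (t + 1) - 1) * (3 ^ 2 ^ (t + 1) + 1) := by
      rw [pow_succ 2 (t + 1), pow_mul]; ring
    rw [hfactor, pow_succ]
    exact mul_dvd_mul ih (even_iff_two_dvd.mp hodd.add_one)

theorem two_pow_add_two_dvd_three_pow_sub_one {b K : ℕ} (hb : 2 ^ b ∣ K) (h2 : 2 ∣ K) :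
    (2 : ℤ) ^ (b + 2) ∣ 3 ^ K - 1 := by
  cases b with
  | zero =>
    exact (pow_dvd_pow 2 (by norm_num)).trans <|
      (two_pow_add_three_dvd_three_pow_two_pow_sub_one 0).trans (dvd_pow_sub_one_of_dvd h2)
  | succ t =>
    exact (two_pow_add_three_dvd_three_pow_two_pow_sub_one t).trans (dvd_pow_sub_one_of_dvd hb)

theorem four_mul_dvd_three_pow_sub_one {b s K : ℕ} (hs : Odd s) (h3 : ¬ 3 ∣ s) (hb : 2 ^ b ∣ K)
    (h2 : 2 ∣ K) (hφ : s.totient ∣ K) : 4 * ((2 ^ b * s : ℕ) : ℤ) ∣ 3 ^ K - 1 := by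
  have heuler : (s : ℤ) ∣ 3 ^ s.totient - 1 := by
    have h := Int.natCast_modEq_iff.mpr
      (Nat.ModEq.pow_totient ((Nat.Prime.coprime_iff_not_dvd Nat.prime_three).mpr h3))
    push_cast at h
    exact h.symm.dvd
  have hcop : IsCoprime ((2 : ℤ) ^ (b + 2)) s := by
    exact_mod_cast Nat.isCoprime_iff_coprime.mpr ((Nat.coprime_two_left.mpr hs).pow_left (b + 2))
  have hsplit : 4 * ((2 ^ b * s : ℕ) : ℤ) = 2 ^ (b + 2) * s := by push_cast; ring
  rw [hsplit]
  exact hcop.mul_dvd (two_pow_add_two_dvd_three_pow_sub_one hb h2)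
    (heuler.trans (dvd_pow_sub_one_of_dvd hφ))

theorem lcm_two_pow_totient_le {b s : ℕ} (hs : Odd s) :
    Nat.lcm (2 ^ max b 1) s.totient ≤ max (2 ^ b * s) 2 := by
  have hpow : 2 ^ max b 1 = max (2 ^ b) 2 := (pow_right_mono₀ one_le_two).map_max
  rcases eq_or_ne s 1 with rfl | hs₁
  · simp [hpow]
  have hs₃ : 2 < s := by obtain ⟨r, rfl⟩ := hs; omega
  have h2lcm := Nat.two_mul_lcm_le_mul (dvd_pow_self 2 (by omega : max b 1 ≠ 0))
    (Nat.totient_even hs₃).two_dvd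
  have hφ : s.totient ≤ s := Nat.totient_le s
  have hmax : 2 ^ max b 1 ≤ 2 * 2 ^ b := by
    rw [hpow]; exact max_le (by omega) (by simp [Nat.one_le_two_pow])
  refine le_max_of_le_left (Nat.le_of_mul_le_mul_left ?_ two_pos)
  calc 2 * Nat.lcm (2 ^ max b 1) s.totient ≤ 2 ^ max b 1 * s.totient := h2lcm
    _ ≤ 2 * 2 ^ b * s := Nat.mul_le_mul hmax hφ
    _ = 2 * (2 ^ b * s) := mul_assoc _ _ _

theorem exists_even_dvd_three_pow_sub_one {m : ℕ} (hm : ¬ 3 ∣ m) :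
    ∃ K, 0 < K ∧ Even K ∧ (4 * m : ℤ) ∣ 3 ^ K - 1 ∧ K ≤ max m 2 := by
  obtain ⟨b, s, hs, rfl⟩ :=
    Nat.exists_eq_two_pow_mul_odd (n := m) (by rintro rfl; exact hm (dvd_zero 3))
  have h2 : 2 ∣ Nat.lcm (2 ^ max b 1) s.totient :=
    (dvd_pow_self 2 (by omega : max b 1 ≠ 0)).trans (Nat.dvd_lcm_left _ _)
  refine ⟨_, Nat.lcm_pos (by positivity) (Nat.totient_pos.mpr hs.pos), even_iff_two_dvd.mpr h2,
    four_mul_dvd_three_pow_sub_one hs (fun h => hm (h.mul_left _))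
      ((pow_dvd_pow 2 (le_max_left b 1)).trans (Nat.dvd_lcm_left _ _)) h2 (Nat.dvd_lcm_right _ _),
    lcm_two_pow_totient_le hs⟩

theorem exists_mem_eventualPeriods_le {d : ℕ} (hd : 1 < d) :
    ∃ k ∈ eventualPeriods salajanU d, k ≤ d := by
  obtain ⟨a, m, hm, rfl⟩ := Nat.exists_eq_pow_mul_and_not_dvd (by omega : d ≠ 0) 3 (by norm_num)
  obtain ⟨K, hK₀, hK, hdvd, hle⟩ := exists_even_dvd_three_pow_sub_one hm
  exact ⟨K, mem_eventualPeriods_three_pow_mul hK₀ hK hdvd,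
    hle.trans (max_le (Nat.le_mul_of_pos_left m (by positivity)) hd)⟩

theorem salajanRho_mem {d : ℕ} (hd : 1 < d) : salajanRho d ∈ eventualPeriods salajanU d := by
  obtain ⟨k, hk, -⟩ := exists_mem_eventualPeriods_le hd
  exact salajanRho_eq_sInf d ▸ Nat.sInf_mem ⟨k, hk⟩

theorem salajanRho_le {d : ℕ} (hd : 1 < d) : salajanRho d ≤ d := by
  obtain ⟨k, hk, hkd⟩ := exists_mem_eventualPeriods_le hd
  exact (salajanRho_eq_sInf d ▸ Nat.sInf_le hk).trans hkd

theorem even_salajanRho {d : ℕ} (hd : 1 < d) : Even (salajanRho d) :=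
  even_of_mem_eventualPeriods hd (salajanRho_mem hd)

theorem salajanRho_mul {d₁ d₂ : ℕ} (h1 : 1 < d₁) (h2 : 1 < d₂) (hcop : Nat.Coprime d₁ d₂) :
    salajanRho (d₁ * d₂) = Nat.lcm (salajanRho d₁) (salajanRho d₂) := by
  simp only [salajanRho_eq_sInf]
  exact sInf_eventualPeriods_mul hcop ⟨_, salajanRho_mem h1⟩ ⟨_, salajanRho_mem h2⟩

theorem salajan_period_of_coprime_product_general (d₁ d₂ : ℕ) (h1 : 1 < d₁) (h2 : 1 < d₂)
    (hcop : Nat.Coprime d₁ d₂) :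
    salajanRho (d₁ * d₂) = Nat.lcm (salajanRho d₁) (salajanRho d₂) ∧
    2 * salajanRho (d₁ * d₂) ≤ salajanRho d₁ * salajanRho d₂ ∧
    salajanRho d₁ * salajanRho d₂ ≤ d₁ * d₂ := by
  have hmul := salajanRho_mul h1 h2 hcop
  refine ⟨hmul, ?_, Nat.mul_le_mul (salajanRho_le h1) (salajanRho_le h2)⟩
  rw [hmul]
  exact Nat.two_mul_lcm_le_mul (even_salajanRho h1).two_dvd (even_salajanRho h2).two_dvd

theorem salajan_period_of_coprime_product (d₁ d₂ : ℕ) (h1 : 1 < d₁) (h2 : 1 < d₂)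
    (hcop : Nat.Coprime d₁ d₂) (h9 : ¬ 9 ∣ d₁ * d₂) :
    salajanRho (d₁ * d₂) = Nat.lcm (salajanRho d₁) (salajanRho d₂) ∧
    2 * salajanRho (d₁ * d₂) ≤ salajanRho d₁ * salajanRho d₂ ∧
    salajanRho d₁ * salajanRho d₂ ≤ d₁ * d₂ :=
  salajan_period_of_coprime_product_general d₁ d₂ h1 h2 hcop
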